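/- arXiv:2305.05877 — 2 statements merged into one kernel-verified Lean document; each statement's English description precedes it below -/
import Mathlib

section
/- There exists a unique ℚ(q)-linear map j : Uⁱ → U⁻ such that j(1) = 1 and j(B·u) = F·j(u) + R(j(u)) for all u ∈ Uⁱ. Moreover, for every n ≥ 0 the element j(Bⁿ) is a monic polynomial of degree n in F; consequently j is a ℚ(q)-linear isomorphism. -/
/-!
Setting: `K = ℚ(q)` is the field of rational functions over `ℚ`; `U⁻ = ℚ(q)[F]` and
`Uⁱ = ℚ(q)[B]` are both realized as `Polynomial K`, with `F` resp. `B` the variable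
`Polynomial.X`.
-/

noncomputable section

abbrev K : Type := RatFunc ℚ

/-- The variable `q` of `ℚ(q)`. -/
def q : K := RatFunc.X

/-- The quantum integer `[n] = (qⁿ - q⁻ⁿ)/(q - q⁻¹)`. -/
def qint (n : ℕ) : K := (q ^ n - q⁻¹ ^ n) / (q - q⁻¹)

/-- The quantum factorial `[n]! = [1][2]⋯[n]`, `[0]! = 1`. -/
def qfact : ℕ → K
  | 0 => 1
  | n + 1 => qfact n * qint (n + 1)

/-- The divided power `F⁽ⁿ⁾ = Fⁿ/[n]!` in `U⁻ = ℚ(q)[F]`. -/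
def Fdiv (n : ℕ) : Polynomial K := Polynomial.C (qfact n)⁻¹ * Polynomial.X ^ n

/-- The value of `R` on the monomial `Fⁿ = [n]!·F⁽ⁿ⁾`: for `n ≥ 1` it is
`[n]!·(q^{n-1}/(1-q⁻²))·F⁽ⁿ⁻¹⁾`, which corresponds to `R(F⁽ⁿ⁾) = (q^{n-1}/(1-q⁻²))·F⁽ⁿ⁻¹⁾`,
and `R(1) = 0`. -/
def Rval : ℕ → Polynomial K
  | 0 => 0
  | n + 1 => (qfact (n + 1) * (q ^ n / (1 - q⁻¹ ^ 2))) • Fdiv n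

/-- `R : U⁻ → U⁻`, the unique `ℚ(q)`-linear map with `R(1) = 0` and
`R(F⁽ⁿ⁾) = (q^{n-1}/(1-q⁻²))·F⁽ⁿ⁻¹⁾` for `n ≥ 1`; it is defined by linear extension of
`Rval` from the basis of monomials `Fⁿ`. -/
def Rmap : Polynomial K →ₗ[K] Polynomial K :=
  (Polynomial.basisMonomials K).constr K Rval

open Polynomial

lemma Rval_degree_lt (n : ℕ) : (Rval n).degree < (n : WithBot ℕ) := by
  cases n with
  | zero => simp [Rval]
  | succ n =>
      calc (Rval (n+1)).degree ≤ (Fdiv n).degree := by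
            simpa [Rval] using degree_smul_le _ (Fdiv n)
        _ ≤ (n : WithBot ℕ) := by
            simpa [Fdiv] using degree_C_mul_X_pow_le n ((qfact n)⁻¹)
        _ < ((n+1 : ℕ) : WithBot ℕ) := by exact_mod_cast Nat.lt_succ_self n

lemma Rmap_X_pow (n : ℕ) : Rmap (X ^ n : Polynomial K) = Rval n := by
  have := (Polynomial.basisMonomials K).constr_basis K Rval n
  simpa [Rmap, X_pow_eq_monomial] using this

lemma Rmap_degree_lt (n : ℕ) (f : Polynomial K) (hf : f.degree < (n : WithBot ℕ)) :
    (Rmap f).degree < (n : WithBot ℕ) := by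
  by_cases h0 : f = 0
  · simpa [h0] using (by exact ((WithBot.bot_lt_coe n) : (⊥ : WithBot ℕ) < n))
  · have hnd : f.natDegree < n := natDegree_lt_iff_degree_lt h0 |>.mpr hf
    have hsum : f = ∑ i ∈ Finset.range n, Polynomial.monomial i (f.coeff i) :=
      f.as_sum_range' n hnd
    have : Rmap f = ∑ i ∈ Finset.range n, f.coeff i • Rval i := by
      conv_lhs => rw [hsum]
      rw [map_sum]
      refine Finset.sum_congr rfl fun i _ => ?_
      rw [← smul_X_eq_monomial, map_smul, Rmap_X_pow]
    rw [this]
    refine lt_of_le_of_lt (degree_sum_le _ _) ?_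
    refine (Finset.sup_lt_iff (WithBot.bot_lt_coe n)).mpr fun i hi => ?_
    refine lt_of_le_of_lt (degree_smul_le _ _) ?_
    exact lt_trans (Rval_degree_lt i) (Nat.cast_lt.mpr (Finset.mem_range.mp hi))

/-- The recursively defined values `j(Bⁿ)`. -/
def pSeq : ℕ → Polynomial K
  | 0 => 1
  | n + 1 => X * pSeq n + Rmap (pSeq n)

lemma pSeq_monic_deg (n : ℕ) : (pSeq n).Monic ∧ (pSeq n).degree = (n : WithBot ℕ) := by
  induction n with
  | zero => exact ⟨monic_one, degree_one⟩
  | succ n ih =>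
      obtain ⟨hm, hd⟩ := ih
      have hXm : (X * pSeq n).Monic := monic_X.mul hm
      have hXd : (X * pSeq n).degree = ((n + 1 : ℕ) : WithBot ℕ) := by
        rw [degree_mul, degree_X, hd]
        push_cast; ring
      have hR : (Rmap (pSeq n)).degree < ((n + 1 : ℕ) : WithBot ℕ) := by
        refine Rmap_degree_lt _ _ ?_
        rw [hd]; exact_mod_cast Nat.lt_succ_self n
      constructor
      · exact hXm.add_of_left (by rw [hXd]; exact hR)
      · rw [pSeq, degree_add_eq_left_of_degree_lt (by rw [hXd]; exact hR), hXd]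

/-- The canonical map `j`. -/
def jmap : Polynomial K →ₗ[K] Polynomial K :=
  (Polynomial.basisMonomials K).constr K pSeq

lemma jmap_X_pow (n : ℕ) : jmap (X ^ n : Polynomial K) = pSeq n := by
  have := (Polynomial.basisMonomials K).constr_basis K pSeq n
  simpa [jmap, X_pow_eq_monomial] using this

lemma jmap_prop : jmap (1 : Polynomial K) = 1 ∧
    ∀ u : Polynomial K, jmap (X * u) = X * jmap u + Rmap (jmap u) := by
  constructor
  · simpa [pSeq] using jmap_X_pow 0
  · intro u
    have : jmap ∘ₗ LinearMap.mulLeft K (X : Polynomial K) =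
        LinearMap.mulLeft K (X : Polynomial K) ∘ₗ jmap + Rmap ∘ₗ jmap := by
      apply (Polynomial.basisMonomials K).ext
      intro n
      simp only [LinearMap.comp_apply, LinearMap.add_apply, LinearMap.mulLeft_apply,
        coe_basisMonomials, ← X_pow_eq_monomial]
      rw [← pow_succ', jmap_X_pow, jmap_X_pow, pSeq]
    have h := congrArg (fun g => g u) this
    simpa using h

lemma eq_jmap (j : Polynomial K →ₗ[K] Polynomial K)
    (h1 : j 1 = 1)
    (h2 : ∀ u : Polynomial K, j (X * u) = X * j u + Rmap (j u)) :
    j = jmap := by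
  have key : ∀ n, j (X ^ n : Polynomial K) = pSeq n := by
    intro n
    induction n with
    | zero => simpa [pSeq] using h1
    | succ n ih => rw [pow_succ', h2, ih, pSeq]
  apply (Polynomial.basisMonomials K).ext
  intro n
  simp only [coe_basisMonomials, ← X_pow_eq_monomial]
  rw [key, jmap_X_pow]

lemma jmap_injective : Function.Injective jmap := by
  rw [injective_iff_map_eq_zero]
  intro u hu
  by_contra h0
  set d := u.natDegree with hd
  have hsum : u = ∑ i ∈ Finset.range (d + 1), Polynomial.monomial i (u.coeff i) :=
    u.as_sum_range' (d + 1) (Nat.lt_succ_self d)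
  have hju : jmap u = ∑ i ∈ Finset.range (d + 1), u.coeff i • pSeq i := by
    conv_lhs => rw [hsum]
    rw [map_sum]
    refine Finset.sum_congr rfl fun i _ => ?_
    rw [← smul_X_eq_monomial, map_smul, jmap_X_pow]
  have hcoeff : (jmap u).coeff d = u.coeff d := by
    rw [hju, finset_sum_coeff]
    rw [Finset.sum_eq_single d]
    · obtain ⟨hm, hdeg⟩ := pSeq_monic_deg d
      have : (pSeq d).natDegree = d := natDegree_eq_of_degree_eq_some hdeg
      have h1 : (pSeq d).coeff d = 1 := by simpa [this] using hm.coeff_natDegree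
      rw [coeff_smul, h1]
      simp
    · intro i hi hne
      have hid : i < d := lt_of_le_of_ne (Nat.lt_succ_iff.mp (Finset.mem_range.mp hi)) hne
      obtain ⟨hm, hdeg⟩ := pSeq_monic_deg i
      have hnd : (pSeq i).natDegree = i := natDegree_eq_of_degree_eq_some hdeg
      have h0' : (pSeq i).coeff d = 0 :=
        coeff_eq_zero_of_natDegree_lt (by rw [hnd]; exact hid)
      rw [coeff_smul, h0']
      simp
    · intro h; exact absurd (Finset.self_mem_range_succ d) h
  rw [hu] at hcoeff
  have hlc : u.leadingCoeff = 0 := by rw [leadingCoeff, ← hd, ← hcoeff, coeff_zero]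
  exact h0 (leadingCoeff_eq_zero.mp hlc)

lemma jmap_surjective : Function.Surjective jmap := by
  have key : ∀ n : ℕ, ∀ f : Polynomial K, f.degree < (n : WithBot ℕ) →
      ∃ u, jmap u = f := by
    intro n
    induction n with
    | zero =>
        intro f hf
        have : f = 0 := degree_eq_bot.mp (Nat.WithBot.lt_zero_iff.mp (by exact_mod_cast hf))
        exact ⟨0, by simp [this]⟩
    | succ n ih =>
        intro f hf
        set c := f.coeff n with hc
        have hdeg : (f - c • pSeq n).degree < (n : WithBot ℕ) := by
          rw [degree_lt_iff_coeff_zero]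
          intro m hm
          obtain ⟨hmonic, hdn⟩ := pSeq_monic_deg n
          have hnd : (pSeq n).natDegree = n := natDegree_eq_of_degree_eq_some hdn
          rcases eq_or_lt_of_le hm with heq | hlt
          · have h1 : (pSeq n).coeff n = 1 := by simpa [hnd] using hmonic.coeff_natDegree
            rw [coeff_sub, coeff_smul, ← heq, h1]
            simp [hc]
          · rw [coeff_sub, coeff_smul,
              coeff_eq_zero_of_degree_lt (lt_of_lt_of_le hf (by exact_mod_cast hlt)),
              coeff_eq_zero_of_natDegree_lt (by rw [hnd]; exact hlt)]
            simp
        obtain ⟨u, hu⟩ := ih _ hdeg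
        refine ⟨u + c • X ^ n, ?_⟩
        rw [map_add, map_smul, jmap_X_pow, hu]
        ring
  intro f
  refine key (f.natDegree + 1) f ?_
  exact lt_of_le_of_lt degree_le_natDegree (by exact_mod_cast Nat.lt_succ_self _)

/-- There exists a unique `ℚ(q)`-linear map `j : Uⁱ → U⁻` such that `j(1) = 1`
and `j(B·u) = F·j(u) + R(j(u))` for all `u ∈ Uⁱ`.  Moreover, for every `n ≥ 0` the element
`j(Bⁿ)` is a monic polynomial of degree `n` in `F`; consequently `j` is a `ℚ(q)`-linear
isomorphism. -/
theorem stmt0 :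
    (∃! j : Polynomial K →ₗ[K] Polynomial K,
        j 1 = 1 ∧ ∀ u : Polynomial K, j (Polynomial.X * u) = Polynomial.X * j u + Rmap (j u)) ∧
    ∀ j : Polynomial K →ₗ[K] Polynomial K,
      (j 1 = 1 ∧ ∀ u : Polynomial K, j (Polynomial.X * u) = Polynomial.X * j u + Rmap (j u)) →
      (∀ n : ℕ, (j (Polynomial.X ^ n)).Monic ∧ (j (Polynomial.X ^ n)).natDegree = n) ∧
        Function.Bijective j := by
  constructor
  · exact ⟨jmap, jmap_prop, fun j' ⟨h1, h2⟩ => eq_jmap j' h1 h2⟩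
  · rintro j ⟨h1, h2⟩
    have hj : j = jmap := eq_jmap j h1 h2
    subst hj
    constructor
    · intro n
      obtain ⟨hm, hd⟩ := pSeq_monic_deg n
      rw [jmap_X_pow]
      exact ⟨hm, natDegree_eq_of_degree_eq_some hd⟩
    · exact ⟨jmap_injective, jmap_surjective⟩

end
end

section
/- The chord diagram generating functions satisfy T_{0,0}(q) = 1 and, for every pair (f, n) ∈ ℕ² with (f, n) ≠ (0, 0), the recurrence T_{f,n}(q) = T_{f,n-1}(q) + (1 + q + q² + ⋯ + qⁿ)·T_{f-1,n+1}(q), interpreting T_{f,n} as 0 if f or n is negative. -/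
/-!
Setting: `K = ℚ(q)` is the field of rational functions over `ℚ`; `U⁻ = ℚ(q)[F]` and
`Uⁱ = ℚ(q)[B]` are both realized as `Polynomial K`, with `F` resp. `B` the variable
`Polynomial.X`.
-/

noncomputable section

/-- Chord diagrams with `f` free chords and `n` tethered chords, encoded as involutions `σ` of
`{1,…,2f+n}` with exactly `n` fixed points: the fixed-point set is the set `T` of tether
points, and the 2-element orbits `{x, σ x}` are the blocks of the perfect matching `M` of
the complement of `T`. -/
def chordDiagrams (f n : ℕ) : Finset (Fin (2 * f + n) → Fin (2 * f + n)) :=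
  Finset.univ.filter fun σ =>
    (∀ x, σ (σ x) = x) ∧ (Finset.univ.filter fun x => σ x = x).card = n

/-- The number of crossings of a chord diagram encoded as an involution `σ`: the number of
pairs of matched blocks `{a<b}`, `{c<d}` with `a < c < b < d` (each such pair counted once,
via `(x, y) = (a, c)`), plus the number of pairs `(p, {a<b})` of a tether point `p` and a
block with `a < p < b` (counted via `(p, a)`). -/
def crossings {N : ℕ} (σ : Fin N → Fin N) : ℕ :=
  (Finset.univ.filter fun p : Fin N × Fin N =>
      σ p.1 ≠ p.1 ∧ σ p.2 ≠ p.2 ∧ p.1 < p.2 ∧ p.2 < σ p.1 ∧ σ p.1 < σ p.2).card +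
  (Finset.univ.filter fun p : Fin N × Fin N =>
      σ p.1 = p.1 ∧ p.2 < p.1 ∧ p.1 < σ p.2).card

/-- `T_{f,n}(q) = Σ_c N(f,n,c)·q^c ∈ ℕ[q]`, where `N(f,n,c)` is the number of chord diagrams
with `f` free chords, `n` tethered chords and `c` crossings. -/
def Tpoly (f n : ℕ) : Polynomial ℕ :=
  ∑ σ ∈ chordDiagrams f n, Polynomial.X ^ crossings σ

namespace Stmt6Aux

open Finset

/-- Chord diagrams on `N` points with `n` tether points. -/
def D (N n : ℕ) : Finset (Fin N → Fin N) :=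
  Finset.univ.filter fun σ =>
    (∀ x, σ (σ x) = x) ∧ (Finset.univ.filter fun x => σ x = x).card = n

def TP (N n : ℕ) : Polynomial ℕ := ∑ σ ∈ D N n, Polynomial.X ^ crossings σ

lemma Tpoly_eq (f n : ℕ) : Tpoly f n = TP (2 * f + n) n := rfl

def fixSet {N : ℕ} (σ : Fin N → Fin N) : Finset (Fin N) :=
  Finset.univ.filter fun x => σ x = x

lemma mem_D {N n : ℕ} {σ : Fin N → Fin N} :
    σ ∈ D N n ↔ (∀ x, σ (σ x) = x) ∧ (fixSet σ).card = n := by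
  simp [D, fixSet]

def S1 {N : ℕ} (σ : Fin N → Fin N) : Finset (Fin N × Fin N) :=
  Finset.univ.filter fun p =>
    σ p.1 ≠ p.1 ∧ σ p.2 ≠ p.2 ∧ p.1 < p.2 ∧ p.2 < σ p.1 ∧ σ p.1 < σ p.2

def S2 {N : ℕ} (σ : Fin N → Fin N) : Finset (Fin N × Fin N) :=
  Finset.univ.filter fun p => σ p.1 = p.1 ∧ p.2 < p.1 ∧ p.1 < σ p.2

lemma crossings_eq {N : ℕ} (σ : Fin N → Fin N) :
    crossings σ = (S1 σ).card + (S2 σ).card := rfl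

variable {M : ℕ}

/-- Extend by a tether at the last point. -/
def extA (σ : Fin M → Fin M) : Fin (M + 1) → Fin (M + 1) :=
  Fin.lastCases (Fin.last M) (fun i => (σ i).castSucc)

/-- Extend by matching the last point to the (former tether) point `j`. -/
def extB (σ : Fin M → Fin M) (j : Fin M) : Fin (M + 1) → Fin (M + 1) :=
  Fin.lastCases j.castSucc (fun i => if i = j then Fin.last M else (σ i).castSucc)

/-- Restriction of an involution on `M+1` points to the first `M` points (a point matched
with the last point becomes a fixed point). -/
def res (σ : Fin (M + 1) → Fin (M + 1)) : Fin M → Fin M :=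
  fun i => if h : σ i.castSucc = Fin.last M then i else (σ i.castSucc).castPred h

@[simp] lemma extA_last (σ : Fin M → Fin M) : extA σ (Fin.last M) = Fin.last M :=
  Fin.lastCases_last
@[simp] lemma extA_castSucc (σ : Fin M → Fin M) (i : Fin M) :
    extA σ i.castSucc = (σ i).castSucc := Fin.lastCases_castSucc i
@[simp] lemma extB_last (σ : Fin M → Fin M) (j : Fin M) :
    extB σ j (Fin.last M) = j.castSucc := Fin.lastCases_last
@[simp] lemma extB_castSucc (σ : Fin M → Fin M) (j i : Fin M) :
    extB σ j i.castSucc = if i = j then Fin.last M else (σ i).castSucc :=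
  Fin.lastCases_castSucc i

lemma castSucc_ne_last (i : Fin M) : i.castSucc ≠ Fin.last M :=
  (Fin.castSucc_lt_last i).ne

lemma res_of_ne {σ : Fin (M + 1) → Fin (M + 1)} {i : Fin M}
    (h : σ i.castSucc ≠ Fin.last M) : (res σ i).castSucc = σ i.castSucc := by
  simp [res, dif_neg h]

lemma res_of_eq {σ : Fin (M + 1) → Fin (M + 1)} {i : Fin M}
    (h : σ i.castSucc = Fin.last M) : res σ i = i := by
  simp [res, dif_pos h]


lemma fix_extA (σ : Fin M → Fin M) :
    fixSet (extA σ) = insert (Fin.last M) ((fixSet σ).image Fin.castSucc) := by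
  ext x
  cases x using Fin.lastCases with
  | last => simp [fixSet]
  | cast i =>
    simp only [fixSet, mem_filter, mem_univ, true_and, mem_insert, mem_image,
      extA_castSucc, Fin.castSucc_inj]
    constructor
    · intro h; exact Or.inr ⟨i, h, rfl⟩
    · rintro (h | ⟨a, ha, rfl⟩)
      · exact absurd h (castSucc_ne_last i)
      · exact ha

lemma card_fix_extA (σ : Fin M → Fin M) :
    (fixSet (extA σ)).card = (fixSet σ).card + 1 := by
  rw [fix_extA, card_insert_of_notMem, card_image_of_injective _ (Fin.castSucc_injective M)]
  simp only [mem_image]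
  rintro ⟨a, _, ha⟩
  exact castSucc_ne_last a ha

lemma card_transfer (P : Fin (M + 1) × Fin (M + 1) → Prop) [DecidablePred P]
    (h1 : ∀ p, P p → p.1 ≠ Fin.last M) (h2 : ∀ p, P p → p.2 ≠ Fin.last M) :
    (Finset.univ.filter P).card
      = (Finset.univ.filter fun p : Fin M × Fin M => P (p.1.castSucc, p.2.castSucc)).card := by
  refine Finset.card_bij'
    (fun p hp => (p.1.castPred (h1 p (by simpa using hp)), p.2.castPred (h2 p (by simpa using hp))))
    (fun p _ => (p.1.castSucc, p.2.castSucc)) ?_ ?_ ?_ ?_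
  · intro a ha
    simp only [mem_filter, mem_univ, true_and] at ha ⊢
    simpa [Fin.castSucc_castPred] using ha
  · intro a ha
    simp only [mem_filter, mem_univ, true_and] at ha ⊢
    exact ha
  · intro a ha
    simp [Fin.castSucc_castPred]
  · intro a ha
    simp [Fin.castPred_castSucc]

lemma ne_last_of_lt {a b : Fin (M + 1)} (h : a < b) : a ≠ Fin.last M := by
  rintro rfl
  exact absurd h (Fin.not_lt.mpr (Fin.le_last b))

lemma extA_inv (σ : Fin M → Fin M) (hσ : ∀ x, σ (σ x) = x) :
    ∀ x, extA σ (extA σ x) = x := by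
  intro x
  cases x using Fin.lastCases with
  | last => simp
  | cast i => simp [hσ i]

lemma crossings_extA (σ : Fin M → Fin M) : crossings (extA σ) = crossings σ := by
  rw [crossings_eq, crossings_eq]
  congr 1
  · rw [S1, card_transfer]
    · apply congrArg
      apply filter_congr
      intro p _
      simp [S1, Fin.castSucc_lt_castSucc_iff]
    · exact fun p hp => ne_last_of_lt hp.2.2.1
    · exact fun p hp => ne_last_of_lt hp.2.2.2.1
  · rw [S2, card_transfer]
    · apply congrArg
      apply filter_congr
      intro p _
      simp [S2, Fin.castSucc_lt_castSucc_iff]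
    · intro p hp hl
      rw [hl] at hp
      exact absurd hp.2.2 (Fin.not_lt.mpr (Fin.le_last _))
    · exact fun p hp => ne_last_of_lt hp.2.1


lemma inj_of_inv {N : ℕ} {σ : Fin N → Fin N} (hσ : ∀ x, σ (σ x) = x) :
    Function.Injective σ := fun a b h => by rw [← hσ a, h, hσ b]

section A
variable {σ : Fin (M + 1) → Fin (M + 1)} (hσ : ∀ x, σ (σ x) = x)
  (hl : σ (Fin.last M) = Fin.last M)

include hσ hl

lemma ne_last_A (i : Fin M) : σ i.castSucc ≠ Fin.last M := by
  intro h
  have := inj_of_inv hσ (h.trans hl.symm)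
  exact castSucc_ne_last i this

lemma res_castSucc_A (i : Fin M) : (res σ i).castSucc = σ i.castSucc :=
  res_of_ne (ne_last_A hσ hl i)

lemma res_inv_A : ∀ i, res σ (res σ i) = i := by
  intro i
  apply Fin.castSucc_injective
  rw [res_castSucc_A hσ hl, res_castSucc_A hσ hl, hσ]

lemma fix_res_A : fixSet σ = insert (Fin.last M) ((fixSet (res σ)).image Fin.castSucc) := by
  ext x
  cases x using Fin.lastCases with
  | last => simp [fixSet, hl]
  | cast i =>
    simp only [fixSet, mem_filter, mem_univ, true_and, mem_insert, mem_image]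
    constructor
    · intro h
      refine Or.inr ⟨i, ?_, rfl⟩
      apply Fin.castSucc_injective
      rw [res_castSucc_A hσ hl, h]
    · rintro (h | ⟨a, ha, hae⟩)
      · exact absurd h (castSucc_ne_last i)
      · obtain rfl : a = i := Fin.castSucc_injective _ hae
        rw [← res_castSucc_A hσ hl, ha]

lemma card_fix_res_A : (fixSet σ).card = (fixSet (res σ)).card + 1 := by
  rw [fix_res_A hσ hl, card_insert_of_notMem,
    card_image_of_injective _ (Fin.castSucc_injective M)]
  simp only [mem_image]
  rintro ⟨a, _, ha⟩
  exact castSucc_ne_last a ha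

lemma extA_res : extA (res σ) = σ := by
  funext x
  cases x using Fin.lastCases with
  | last => rw [extA_last, hl]
  | cast i => rw [extA_castSucc, res_castSucc_A hσ hl]

end A

lemma res_extA (σ : Fin M → Fin M) : res (extA σ) = σ := by
  funext i
  apply Fin.castSucc_injective
  rw [res_of_ne, extA_castSucc]
  rw [extA_castSucc]
  exact castSucc_ne_last _

lemma lemA (M n : ℕ) :
    ∑ σ ∈ (D (M + 1) (n + 1)).filter (fun σ => σ (Fin.last M) = Fin.last M),
      (Polynomial.X : Polynomial ℕ) ^ crossings σ = TP M n := by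
  rw [TP]
  refine Finset.sum_bij' (fun σ _ => res σ) (fun σ' _ => extA σ') ?_ ?_ ?_ ?_ ?_
  · intro σ hm
    rw [mem_filter, mem_D] at hm
    obtain ⟨⟨hσ, hcard⟩, hl⟩ := hm
    rw [mem_D]
    show (∀ x, res σ (res σ x) = x) ∧ (fixSet (res σ)).card = n
    refine ⟨res_inv_A hσ hl, ?_⟩
    have := card_fix_res_A hσ hl
    omega
  · intro σ' hm
    rw [mem_D] at hm
    obtain ⟨hσ, hcard⟩ := hm
    rw [mem_filter, mem_D]
    exact ⟨⟨extA_inv σ' hσ, by rw [card_fix_extA, hcard]⟩, extA_last σ'⟩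
  · intro σ hm
    rw [mem_filter, mem_D] at hm
    exact extA_res hm.1.1 hm.2
  · intro σ' _
    exact res_extA σ'
  · intro σ hm
    rw [mem_filter, mem_D] at hm
    show (Polynomial.X : Polynomial ℕ) ^ crossings σ = Polynomial.X ^ crossings (res σ)
    have h2 : crossings (res σ) = crossings σ := by
      conv_rhs => rw [← extA_res hm.1.1 hm.2]
      rw [crossings_extA]
    rw [h2]


@[simp] lemma castSucc_ne_last' (i : Fin M) : ¬ (i.castSucc = Fin.last M) :=
  castSucc_ne_last i
@[simp] lemma last_ne_castSucc (i : Fin M) : ¬ (Fin.last M = i.castSucc) :=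
  fun h => castSucc_ne_last i h.symm
@[simp] lemma not_last_lt (x : Fin (M + 1)) : ¬ (Fin.last M < x) :=
  Fin.not_lt.mpr (Fin.le_last x)

section Bfwd
variable {σ' : Fin M → Fin M} {j : Fin M} (hσ : ∀ x, σ' (σ' x) = x) (hj : σ' j = j)
include hσ hj

lemma apply_ne (i : Fin M) (hi : i ≠ j) : σ' i ≠ j := by
  intro h
  exact hi (by rw [← hσ i, h, hj])

lemma extB_inv : ∀ x, extB σ' j (extB σ' j x) = x := by
  intro x
  cases x using Fin.lastCases with
  | last => simp
  | cast i =>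
    by_cases hi : i = j
    · subst hi; simp
    · simp only [extB_castSucc, if_neg hi]
      rw [if_neg (apply_ne hσ hj i hi), hσ]

lemma fix_extB : fixSet (extB σ' j) = ((fixSet σ').erase j).image Fin.castSucc := by
  ext x
  cases x using Fin.lastCases with
  | last =>
    simp only [fixSet, mem_filter, mem_univ, true_and, extB_last, mem_image, mem_erase]
    simp
  | cast i =>
    simp only [fixSet, mem_filter, mem_univ, true_and, extB_castSucc, mem_image, mem_erase]
    by_cases hi : i = j
    · subst hi; simp
    · rw [if_neg hi]
      simp only [Fin.castSucc_inj]
      constructor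
      · intro h; exact ⟨i, ⟨hi, h⟩, rfl⟩
      · rintro ⟨a, ⟨ha1, ha2⟩, rfl⟩; exact ha2

lemma card_fix_extB {n : ℕ} (hc : (fixSet σ').card = n + 1) :
    (fixSet (extB σ' j)).card = n := by
  rw [fix_extB hσ hj, card_image_of_injective _ (Fin.castSucc_injective M),
    card_erase_of_mem (by simp [fixSet, hj]), hc]
  omega

lemma res_extB : res (extB σ' j) = σ' := by
  funext i
  by_cases hi : i = j
  · subst hi
    rw [res_of_eq (by simp), hj]
  · apply Fin.castSucc_injective
    rw [res_of_ne (by rw [extB_castSucc, if_neg hi]; simp), extB_castSucc, if_neg hi]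

end Bfwd

section Bbwd
variable {σ : Fin (M + 1) → Fin (M + 1)} {j₀ : Fin M} (hσ : ∀ x, σ (σ x) = x)
  (hj0 : j₀.castSucc = σ (Fin.last M))
include hσ hj0

lemma sigma_j0 : σ j₀.castSucc = Fin.last M := by rw [hj0, hσ]

lemma ne_last_B (i : Fin M) (hi : i ≠ j₀) : σ i.castSucc ≠ Fin.last M := by
  intro h
  apply hi
  apply Fin.castSucc_injective
  rw [hj0]
  exact inj_of_inv hσ (h.trans (hσ (Fin.last M)).symm)

lemma res_j0 : res σ j₀ = j₀ := res_of_eq (sigma_j0 hσ hj0)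

lemma res_ne_j0 (i : Fin M) (hi : i ≠ j₀) : res σ i ≠ j₀ := by
  intro h
  have h1 := res_of_ne (ne_last_B hσ hj0 i hi)
  rw [h, hj0] at h1
  exact castSucc_ne_last i (inj_of_inv hσ h1.symm)

lemma res_inv_B : ∀ i, res σ (res σ i) = i := by
  intro i
  by_cases hi : i = j₀
  · subst hi; rw [res_j0 hσ hj0, res_j0 hσ hj0]
  · have h1 := res_of_ne (ne_last_B hσ hj0 i hi)
    apply Fin.castSucc_injective
    rw [res_of_ne (by rw [h1, hσ]; exact castSucc_ne_last i), h1, hσ]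

lemma fix_res_B : fixSet σ = ((fixSet (res σ)).erase j₀).image Fin.castSucc := by
  ext x
  cases x using Fin.lastCases with
  | last =>
    simp only [fixSet, mem_filter, mem_univ, true_and, mem_image, mem_erase]
    constructor
    · intro h; exact absurd (hj0.trans h) (castSucc_ne_last j₀)
    · rintro ⟨a, _, ha⟩; exact absurd ha (castSucc_ne_last a)
  | cast i =>
    simp only [fixSet, mem_filter, mem_univ, true_and, mem_image, mem_erase]
    constructor
    · intro h
      have hi : i ≠ j₀ := by
        rintro rfl
        rw [sigma_j0 hσ hj0] at h
        exact last_ne_castSucc i h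
      refine ⟨i, ⟨hi, ?_⟩, rfl⟩
      apply Fin.castSucc_injective
      rw [res_of_ne (ne_last_B hσ hj0 i hi), h]
    · rintro ⟨a, ⟨ha1, ha2⟩, hae⟩
      obtain rfl : a = i := Fin.castSucc_injective _ hae
      rw [← res_of_ne (ne_last_B hσ hj0 a ha1), ha2]

lemma card_fix_res_B {n : ℕ} (hc : (fixSet σ).card = n) : (fixSet (res σ)).card = n + 1 := by
  rw [fix_res_B hσ hj0, card_image_of_injective _ (Fin.castSucc_injective M),
    card_erase_of_mem] at hc
  · have : j₀ ∈ fixSet (res σ) := by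
      simp only [fixSet, mem_filter, mem_univ, true_and]
      exact res_j0 hσ hj0
    have := card_pos.mpr ⟨j₀, this⟩
    omega
  · simp only [fixSet, mem_filter, mem_univ, true_and]
    exact res_j0 hσ hj0

lemma extB_res_eq : extB (res σ) j₀ = σ := by
  funext x
  cases x using Fin.lastCases with
  | last => rw [extB_last, hj0]
  | cast i =>
    by_cases hi : i = j₀
    · subst hi
      rw [extB_castSucc, if_pos rfl, sigma_j0 hσ hj0]
    · rw [extB_castSucc, if_neg hi, res_of_ne (ne_last_B hσ hj0 i hi)]

end Bbwd


def tval (σ : Fin M → Fin M) (j : Fin M) : ℕ :=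
  (Finset.univ.filter fun i => σ i = i ∧ j < i).card

def Aset (σ' : Fin M → Fin M) (j : Fin M) : Finset (Fin M) :=
  Finset.univ.filter fun i => i < j ∧ j < σ' i

section Bcross
variable {σ' : Fin M → Fin M} {j : Fin M} (hσ : ∀ x, σ' (σ' x) = x) (hj : σ' j = j)
include hσ hj

lemma card_S1_extB : (S1 (extB σ' j)).card = (S1 σ').card + (Aset σ' j).card := by
  rw [S1, card_transfer _ (fun p hp => ne_last_of_lt hp.2.2.1)
    (fun p hp => ne_last_of_lt hp.2.2.2.1)]
  have hset : (Finset.univ.filter fun p : Fin M × Fin M =>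
        extB σ' j p.1.castSucc ≠ p.1.castSucc ∧ extB σ' j p.2.castSucc ≠ p.2.castSucc ∧
        p.1.castSucc < p.2.castSucc ∧ p.2.castSucc < extB σ' j p.1.castSucc ∧
        extB σ' j p.1.castSucc < extB σ' j p.2.castSucc)
      = S1 σ' ∪ (Aset σ' j).image (fun i => (i, j)) := by
    ext ⟨i, k⟩
    simp only [S1, Aset, mem_filter, mem_union, mem_image, mem_univ, true_and,
      extB_castSucc, Prod.mk.injEq]
    by_cases hi : i = j <;> by_cases hk : k = j
    · subst hi; subst hk
      simp
    · subst hi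
      simp [hj]
    · subst hk
      simp only [if_pos rfl, if_neg hi]
      simp [hj]
      intro h2 h3 h
      rw [h] at h3
      exact absurd h2 (lt_asymm h3)
    · simp only [if_neg hi, if_neg hk]
      simp [Fin.castSucc_lt_castSucc_iff, show j ≠ k from fun h => hk h.symm]
  have hdisj : Disjoint (S1 σ') ((Aset σ' j).image (fun i => (i, j))) := by
    rw [Finset.disjoint_right]
    intro p hp hps
    simp only [mem_image] at hp
    obtain ⟨a, _, rfl⟩ := hp
    rw [S1, mem_filter] at hps
    exact hps.2.2.1 hj
  rw [hset, card_union_of_disjoint hdisj,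
    card_image_of_injective _ (fun a b h => congrArg Prod.fst h)]

lemma card_S2_split : (S2 σ').card = ((S2 σ').filter fun p => p.1 ≠ j).card + (Aset σ' j).card := by
  have hset : S2 σ' = ((S2 σ').filter fun p => p.1 ≠ j) ∪ (Aset σ' j).image (fun r => (j, r)) := by
    ext ⟨x, y⟩
    simp only [S2, Aset, mem_filter, mem_union, mem_image, mem_univ, true_and, Prod.mk.injEq]
    by_cases hx : x = j
    · subst hx
      simp [hj]
    · simp [hx, show ¬ j = x from fun h => hx h.symm]
  have hdisj : Disjoint ((S2 σ').filter fun p => p.1 ≠ j) ((Aset σ' j).image (fun r => (j, r))) := by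
    rw [Finset.disjoint_right]
    intro p hp hps
    simp only [mem_image] at hp
    obtain ⟨a, _, rfl⟩ := hp
    rw [mem_filter] at hps
    exact hps.2 rfl
  conv_lhs => rw [hset]
  rw [card_union_of_disjoint hdisj,
    card_image_of_injective _ (fun a b h => congrArg Prod.snd h)]

lemma card_S2_extB : (S2 (extB σ' j)).card
    = ((S2 σ').filter fun p => p.1 ≠ j).card + tval σ' j := by
  have h1 : ∀ p : Fin (M + 1) × Fin (M + 1),
      (extB σ' j p.1 = p.1 ∧ p.2 < p.1 ∧ p.1 < extB σ' j p.2) → p.1 ≠ Fin.last M := by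
    intro p hp hl
    rw [hl, extB_last] at hp
    exact castSucc_ne_last j hp.1
  rw [S2, card_transfer _ h1 (fun p hp => ne_last_of_lt hp.2.1)]
  have hset : (Finset.univ.filter fun p : Fin M × Fin M =>
        extB σ' j p.1.castSucc = p.1.castSucc ∧ p.2.castSucc < p.1.castSucc ∧
        p.1.castSucc < extB σ' j p.2.castSucc)
      = ((S2 σ').filter fun p => p.1 ≠ j)
        ∪ (Finset.univ.filter fun i => σ' i = i ∧ j < i).image (fun i => (i, j)) := by
    ext ⟨i, k⟩
    simp only [S2, mem_filter, mem_union, mem_image, mem_univ, true_and,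
      extB_castSucc, Prod.mk.injEq]
    by_cases hi : i = j <;> by_cases hk : k = j
    · subst hi; subst hk
      simp
    · subst hi
      simp [hj]
    · subst hk
      simp only [if_pos rfl, if_neg hi]
      simp [hj]
      intro a1 a2 _ _
      exact ⟨a1, a2⟩
    · simp only [if_neg hi, if_neg hk]
      simp [Fin.castSucc_lt_castSucc_iff, hi, show ¬ j = k from fun h => hk h.symm]
  have hdisj : Disjoint ((S2 σ').filter fun p => p.1 ≠ j)
      ((Finset.univ.filter fun i => σ' i = i ∧ j < i).image (fun i => (i, j))) := by
    rw [Finset.disjoint_right]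
    intro p hp hps
    simp only [mem_image, mem_filter, mem_univ, true_and] at hp
    obtain ⟨a, ⟨ha1, ha2⟩, rfl⟩ := hp
    simp only [S2, mem_filter, mem_univ, true_and] at hps
    have h3 := hps.1.2.2
    rw [hj] at h3
    exact absurd h3 (Fin.not_lt.mpr ha2.le)
  rw [hset, card_union_of_disjoint hdisj,
    card_image_of_injective _ (fun a b h => congrArg Prod.fst h)]
  rfl

lemma crossings_extB : crossings (extB σ' j) = crossings σ' + tval σ' j := by
  rw [crossings_eq, crossings_eq, card_S1_extB hσ hj, card_S2_extB hσ hj, card_S2_split hσ hj]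
  omega

end Bcross

lemma tval_lt {σ' : Fin M → Fin M} {a b : Fin M} (ha : a ∈ fixSet σ') (hb : b ∈ fixSet σ')
    (hab : a < b) : tval σ' b < tval σ' a := by
  apply Finset.card_lt_card
  rw [Finset.ssubset_iff_of_subset]
  · refine ⟨b, ?_, ?_⟩
    · simp only [mem_filter, mem_univ, true_and]
      simp only [fixSet, mem_filter, mem_univ, true_and] at hb
      exact ⟨hb, hab⟩
    · simp only [mem_filter, mem_univ, true_and]
      rintro ⟨-, h⟩
      exact absurd h (lt_irrefl b)
  · intro x hx
    simp only [mem_filter, mem_univ, true_and] at hx ⊢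
    exact ⟨hx.1, lt_trans hab hx.2⟩

lemma tval_injOn {σ' : Fin M → Fin M} :
    ∀ a ∈ fixSet σ', ∀ b ∈ fixSet σ', tval σ' a = tval σ' b → a = b := by
  intro a ha b hb heq
  by_contra hne
  rcases lt_or_gt_of_ne hne with h | h
  · exact absurd heq (tval_lt ha hb h).ne'
  · exact absurd heq (tval_lt hb ha h).ne

lemma tval_le {σ' : Fin M → Fin M} {n : ℕ} (hc : (fixSet σ').card = n + 1) {j : Fin M}
    (hjm : j ∈ fixSet σ') : tval σ' j ≤ n := by
  have hsub : (Finset.univ.filter fun i => σ' i = i ∧ j < i) ⊆ (fixSet σ').erase j := by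
    intro x hx
    simp only [mem_filter, mem_univ, true_and] at hx
    simp only [mem_erase, fixSet, mem_filter, mem_univ, true_and]
    exact ⟨hx.2.ne', hx.1⟩
  have := Finset.card_le_card hsub
  rw [Finset.card_erase_of_mem hjm, hc] at this
  exact le_trans this (by omega)

lemma sum_tval {σ' : Fin M → Fin M} {n : ℕ} (hc : (fixSet σ').card = n + 1) :
    ∑ i ∈ Finset.range (n + 1), (Polynomial.X : Polynomial ℕ) ^ i
      = ∑ j ∈ fixSet σ', Polynomial.X ^ tval σ' j := by
  have himg : (fixSet σ').image (tval σ') = Finset.range (n + 1) := by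
    apply Finset.eq_of_subset_of_card_le
    · intro t ht
      simp only [mem_image] at ht
      obtain ⟨j, hj, rfl⟩ := ht
      rw [Finset.mem_range]
      exact Nat.lt_succ_of_le (tval_le hc hj)
    · rw [Finset.card_range, Finset.card_image_of_injOn tval_injOn, hc]
  rw [← himg, Finset.sum_image tval_injOn]

lemma lemB (M n : ℕ) :
    ∑ σ ∈ (D (M + 1) n).filter (fun σ => σ (Fin.last M) ≠ Fin.last M),
      (Polynomial.X : Polynomial ℕ) ^ crossings σ
    = (∑ i ∈ Finset.range (n + 1), (Polynomial.X : Polynomial ℕ) ^ i) * TP M (n + 1) := by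
  rw [TP, Finset.mul_sum]
  have step : ∀ σ' ∈ D M (n + 1),
      (∑ i ∈ Finset.range (n + 1), (Polynomial.X : Polynomial ℕ) ^ i) * Polynomial.X ^ crossings σ'
        = ∑ j ∈ fixSet σ', Polynomial.X ^ (crossings σ' + tval σ' j) := by
    intro σ' hm
    rw [mem_D] at hm
    rw [sum_tval hm.2, Finset.sum_mul]
    refine Finset.sum_congr rfl fun j _ => ?_
    rw [pow_add, mul_comm]
  rw [Finset.sum_congr rfl step, Finset.sum_sigma' (D M (n + 1)) (fun σ' => fixSet σ')
    (fun σ' j => (Polynomial.X : Polynomial ℕ) ^ (crossings σ' + tval σ' j))]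
  refine Finset.sum_bij'
    (fun σ hm => ⟨res σ, (σ (Fin.last M)).castPred (Finset.mem_filter.mp hm).2⟩)
    (fun x _ => extB x.1 x.2) ?_ ?_ ?_ ?_ ?_
  · intro σ hm
    rw [mem_filter, mem_D] at hm
    obtain ⟨⟨hσ, hcard⟩, hne⟩ := hm
    have hj0 : ((σ (Fin.last M)).castPred hne).castSucc = σ (Fin.last M) :=
      Fin.castSucc_castPred _ _
    rw [Finset.mem_sigma]
    constructor
    · rw [mem_D]
      exact ⟨res_inv_B hσ hj0, card_fix_res_B hσ hj0 hcard⟩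
    · simp only [fixSet, mem_filter, mem_univ, true_and]
      exact res_j0 hσ hj0
  · rintro ⟨σ', j⟩ hm
    rw [Finset.mem_sigma, mem_D] at hm
    obtain ⟨⟨hσ, hcard⟩, hjm⟩ := hm
    have hj : σ' j = j := by
      simpa [fixSet] using hjm
    rw [mem_filter, mem_D]
    refine ⟨⟨extB_inv hσ hj, card_fix_extB hσ hj hcard⟩, ?_⟩
    show extB σ' j (Fin.last M) ≠ Fin.last M
    rw [extB_last]
    exact castSucc_ne_last j
  · intro σ hm
    rw [mem_filter, mem_D] at hm
    obtain ⟨⟨hσ, hcard⟩, hne⟩ := hm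
    exact extB_res_eq hσ (Fin.castSucc_castPred _ hne)
  · rintro ⟨σ', j⟩ hm
    rw [Finset.mem_sigma, mem_D] at hm
    obtain ⟨⟨hσ, hcard⟩, hjm⟩ := hm
    have hj : σ' j = j := by simpa [fixSet] using hjm
    have h1 : res (extB σ' j) = σ' := res_extB hσ hj
    have h2 : ∀ hpf, ((extB σ' j) (Fin.last M)).castPred hpf = j := by
      intro hpf
      apply Fin.castSucc_injective
      rw [Fin.castSucc_castPred, extB_last]
    exact Sigma.ext h1 (heq_of_eq (h2 (by rw [extB_last]; exact castSucc_ne_last j)))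
  · intro σ hm
    rw [mem_filter, mem_D] at hm
    obtain ⟨⟨hσ, hcard⟩, hne⟩ := hm
    have hj0 : ((σ (Fin.last M)).castPred hne).castSucc = σ (Fin.last M) :=
      Fin.castSucc_castPred _ _
    show (Polynomial.X : Polynomial ℕ) ^ crossings σ
      = Polynomial.X ^ (crossings (res σ) + tval (res σ) ((σ (Fin.last M)).castPred hne))
    rw [← crossings_extB (res_inv_B hσ hj0) (res_j0 hσ hj0), extB_res_eq hσ hj0]

lemma TP_zero {N k : ℕ} (h : N < k) : TP N k = 0 := by
  rw [TP]
  convert Finset.sum_empty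
  apply Finset.eq_empty_of_forall_notMem
  intro σ hm
  rw [mem_D] at hm
  have := Finset.card_le_univ (fixSet σ)
  simp only [Finset.card_univ, Fintype.card_fin] at this
  omega

lemma TP_rec (M n : ℕ) :
    TP (M + 1) n = (if n = 0 then 0 else TP M (n - 1))
      + (∑ i ∈ Finset.range (n + 1), (Polynomial.X : Polynomial ℕ) ^ i) * TP M (n + 1) := by
  rw [TP, ← Finset.sum_filter_add_sum_filter_not (D (M + 1) n)
    (fun σ => σ (Fin.last M) = Fin.last M)]
  congr 1
  · cases n with
    | zero =>
      rw [if_pos rfl]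
      convert Finset.sum_empty
      apply Finset.eq_empty_of_forall_notMem
      intro σ hm
      rw [mem_filter, mem_D] at hm
      obtain ⟨⟨hσ, hcard⟩, hl⟩ := hm
      have : Fin.last M ∈ fixSet σ := by
        simp only [fixSet, mem_filter, mem_univ, true_and]
        exact hl
      have := Finset.card_pos.mpr ⟨Fin.last M, this⟩
      omega
    | succ m =>
      rw [if_neg (Nat.succ_ne_zero m)]
      exact lemA M m
  · exact lemB M n

end Stmt6Aux

open Stmt6Aux

/-- `T_{0,0}(q) = 1` and, for every `(f, n) ≠ (0, 0)`,
`T_{f,n}(q) = T_{f,n−1}(q) + (1 + q + ⋯ + qⁿ)·T_{f−1,n+1}(q)`, interpreting `T` with a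
negative index as `0`. -/
theorem stmt6 :
    Tpoly 0 0 = 1 ∧
    ∀ f n : ℕ, (f, n) ≠ (0, 0) →
      Tpoly f n =
        (if n = 0 then 0 else Tpoly f (n - 1)) +
          (∑ i ∈ Finset.range (n + 1), Polynomial.X ^ i) *
            (if f = 0 then 0 else Tpoly (f - 1) (n + 1)) := by
  constructor
  · rw [Tpoly]
    have h1 : chordDiagrams 0 0 = Finset.univ := by
      apply Finset.eq_univ_of_forall
      intro σ
      simp only [chordDiagrams, Finset.mem_filter, Finset.mem_univ, true_and]
      constructor
      · intro x; exact x.elim0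
      · simp
    rw [h1]
    have h2 : ∀ σ : Fin (2 * 0 + 0) → Fin (2 * 0 + 0), crossings σ = 0 := by
      intro σ
      rw [crossings]
      simp
    rw [Finset.sum_congr rfl fun σ _ => by rw [h2 σ, pow_zero]]
    simp
  · intro f n hfn
    have hne : ¬(f = 0 ∧ n = 0) := fun ⟨h1, h2⟩ => hfn (by rw [h1, h2])
    obtain ⟨M, hM⟩ : ∃ M, 2 * f + n = M + 1 := ⟨2 * f + n - 1, by omega⟩
    rw [Tpoly_eq, hM, TP_rec]
    congr 1
    · cases n with
      | zero => simp
      | succ m =>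
        rw [if_neg (Nat.succ_ne_zero m), if_neg (Nat.succ_ne_zero m)]
        have : M = 2 * f + m := by omega
        rw [this, Tpoly_eq]
        norm_num
    · congr 1
      cases f with
      | zero =>
        rw [if_pos rfl]
        apply TP_zero
        omega
      | succ e =>
        rw [if_neg (Nat.succ_ne_zero e)]
        have : M = 2 * e + (n + 1) := by omega
        rw [this, Tpoly_eq]
        norm_num

end
end
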